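/- Let G be a block graph with one central vertex c, and let D be the set of pairs {p,q} whose shortest path avoids c. Then the kernel of the shortest path map ψ restricted to ℝ[σ_{ij} : {i,j}∉D] equals the kernel of the simplified map σ_{ij} ↦ a_i a_j (restricted to the same variables). -/

import Mathlib

/-- The induced subgraph of `G` on the vertex set `S` is a 1-clique sum of complete
graphs. -/
inductive SimpleGraph.IsCliqueSumOfCompletes {V : Type*} (G : SimpleGraph V) : Set V → Prop
  | complete (S : Set V) (h : ∀ ⦃i⦄, i ∈ S → ∀ ⦃j⦄, j ∈ S → i ≠ j → G.Adj i j) :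
      IsCliqueSumOfCompletes G S
  | sum (A B : Set V) (c : V) (hAB : Disjoint A B) (hcA : c ∉ A) (hcB : c ∉ B)
      (hA : A.Nonempty) (hB : B.Nonempty)
      (hsep : ∀ a ∈ A, ∀ b ∈ B, ∀ w : G.Walk a b,
        (∀ x ∈ w.support, x ∈ A ∪ B ∪ {c}) → c ∈ w.support)
      (h1 : IsCliqueSumOfCompletes G (A ∪ {c}))
      (h2 : IsCliqueSumOfCompletes G (B ∪ {c})) :
      IsCliqueSumOfCompletes G (A ∪ B ∪ {c})

/-- A block graph: every connected component is a 1-clique sum of complete graphs. -/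
def SimpleGraph.IsBlockGraph {V : Type*} (G : SimpleGraph V) : Prop :=
  ∀ v : V, G.IsCliqueSumOfCompletes {w | G.Reachable v w}

open MvPolynomial

variable {n : ℕ}

/-- The shortest path monomial `a_i a_j ∏_{(i',j') ∈ i↔j} k_{i'j'}`
(the image of `σ_{ij}` under the shortest path map `ψ`; for `i = j` it is `a_i²`). -/
noncomputable def psiMon {G : SimpleGraph (Fin n)} (sp : ∀ i j : Fin n, G.Walk i j)
    (e : Sym2 (Fin n)) : MvPolynomial (Fin n ⊕ Sym2 (Fin n)) ℝ :=
  X (Sum.inl e.out.1) * X (Sum.inl e.out.2) *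
    ((sp e.out.1 e.out.2).darts.map fun d => X (Sum.inr s(d.fst, d.snd))).prod

/-- `c` is a central vertex of `G`: there is a 1-clique partition `(A, B, {c})` of the
vertex set with `{c}` separating `A` from `B`. -/
def IsCentralVertex (G : SimpleGraph (Fin n)) (c : Fin n) : Prop :=
  ∃ A B : Set (Fin n), A.Nonempty ∧ B.Nonempty ∧ Disjoint A B ∧ c ∉ A ∧ c ∉ B ∧
    A ∪ B ∪ {c} = Set.univ ∧ ∀ a ∈ A, ∀ b ∈ B, ∀ w : G.Walk a b, c ∈ w.support

/-- The set of variables not in `D`: pairs whose shortest path passes through `c`. -/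
def throughC {G : SimpleGraph (Fin n)} (sp : ∀ i j : Fin n, G.Walk i j) (c : Fin n) :
    Sym2 (Fin n) → Prop :=
  fun e => c ∈ (sp e.out.1 e.out.2).support

/-!
In a block graph shortest paths are unique: by induction on the clique-sum decomposition, a
shortest path between two vertices on the same side of the cut vertex stays on that side, and
one crossing the cut passes through the cut vertex, where it splits into two shortest paths.
Hence the shortest path `i ↔ j` through `c` is `i ↔ c` followed by `c ↔ j`, so that
`ψ(σ_{ij}) = (a_i ∏_{e ∈ i↔c} k_e) (a_j ∏_{e ∈ j↔c} k_e)`. The substitution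
`a_i ↦ a_i ∏_{e ∈ i↔c} k_e` therefore turns the simplified map into `ψ`, and `k_e ↦ 1` turns
`ψ` back into the simplified map, so the two kernels coincide.
-/

namespace SimpleGraph

variable {V : Type*} {G : SimpleGraph V} {S T A B : Set V} {c u x y : V}

def Separates (G : SimpleGraph V) (S : Set V) (c : V) (A B : Set V) : Prop :=
  ∀ a ∈ A, ∀ b ∈ B, ∀ w : G.Walk a b, (∀ v ∈ w.support, v ∈ S) → c ∈ w.support

theorem Separates.symm (h : G.Separates S c A B) : G.Separates S c B A :=
  fun b hb a ha w hw => by simpa using h a ha b hb w.reverse (by simpa using hw)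

theorem Separates.mem_support (hsep : G.Separates S c A B) (hx : x ∈ A ∪ {c}) (hy : y ∈ B)
    (w : G.Walk x y) (hw : ∀ v ∈ w.support, v ∈ S) : c ∈ w.support := by
  rcases hx with hx | rfl
  · exact hsep x hx y hy w hw
  · exact w.start_mem_support

namespace Walk

structure IsShortestIn (S : Set V) {x y : V} (p : G.Walk x y) : Prop where
  isPath : p.IsPath
  support_subset : ∀ v ∈ p.support, v ∈ S
  length_le : ∀ r : G.Walk x y, (∀ v ∈ r.support, v ∈ S) → p.length ≤ r.length

variable {p : G.Walk x y}

theorem IsShortestIn.of_subset (hp : p.IsShortestIn S) (hTS : T ⊆ S)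
    (hpT : ∀ v ∈ p.support, v ∈ T) : p.IsShortestIn T :=
  ⟨hp.isPath, hpT, fun r hr => hp.length_le r fun v hv => hTS (hr v hv)⟩

theorem eq_of_length_eq_one (p q : G.Walk x y) (hp : p.length = 1) (hq : q.length = 1) :
    p = q := by
  rcases p with _ | ⟨_, _ | ⟨_, _⟩⟩ <;> rcases q with _ | ⟨_, _ | ⟨_, _⟩⟩ <;>
    simp_all [length_cons]

section DecidableEq

variable [DecidableEq V]

theorem IsShortestIn.takeUntil (hp : p.IsShortestIn S) (h : u ∈ p.support) :
    (p.takeUntil u h).IsShortestIn S := by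
  refine ⟨hp.isPath.takeUntil h,
    fun v hv => hp.support_subset v (p.support_takeUntil_subset_support h hv), fun r hr => ?_⟩
  have hle := hp.length_le (r.append (p.dropUntil u h)) fun v hv =>
    ((mem_support_append_iff _ _).mp hv).elim (hr v)
      fun hv => hp.support_subset v (p.support_dropUntil_subset_support h hv)
  have hsplit := congrArg length (p.take_spec h)
  rw [length_append] at hle hsplit
  omega

theorem IsShortestIn.dropUntil (hp : p.IsShortestIn S) (h : u ∈ p.support) :
    (p.dropUntil u h).IsShortestIn S := by
  refine ⟨hp.isPath.dropUntil h,
    fun v hv => hp.support_subset v (p.support_dropUntil_subset_support h hv), fun r hr => ?_⟩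
  have hle := hp.length_le ((p.takeUntil u h).append r) fun v hv =>
    ((mem_support_append_iff _ _).mp hv).elim
      (fun hv => hp.support_subset v (p.support_takeUntil_subset_support h hv)) (hr v)
  have hsplit := congrArg length (p.take_spec h)
  rw [length_append] at hle hsplit
  omega

end DecidableEq

end Walk

open Walk

def HasUniqueShortestPathsIn (G : SimpleGraph V) (S : Set V) : Prop :=
  ∀ ⦃x y : V⦄ (p q : G.Walk x y), p.IsShortestIn S → q.IsShortestIn S → p = q

theorem hasUniqueShortestPathsIn_of_isClique
    (hS : ∀ ⦃i⦄, i ∈ S → ∀ ⦃j⦄, j ∈ S → i ≠ j → G.Adj i j) :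
    G.HasUniqueShortestPathsIn S := by
  intro x y p q hp hq
  by_cases hxy : x = y
  · subst hxy
    rw [eq_nil_iff_nil.mpr (isPath_iff_nil.mp hp.isPath),
      eq_nil_iff_nil.mpr (isPath_iff_nil.mp hq.isPath)]
  have hxS := hp.support_subset x p.start_mem_support
  have hyS := hp.support_subset y p.end_mem_support
  have hadj := hS hxS hyS hxy
  have hlen : ∀ r : G.Walk x y, r.IsShortestIn S → r.length = 1 := fun r hr => by
    have hle := hr.length_le hadj.toWalk (by simpa using ⟨hxS, hyS⟩)
    have hne : r.length ≠ 0 := fun h => hxy (eq_of_length_eq_zero h)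
    simp only [Adj.toWalk, length_cons, length_nil] at hle
    omega
  exact eq_of_length_eq_one p q (hlen p hp) (hlen q hq)

section DecidableEq

variable [DecidableEq V]

theorem Separates.support_subset (hsep : G.Separates S c A B) (hcB : c ∉ B)
    (hS : S ⊆ A ∪ B ∪ {c}) (hx : x ∈ A ∪ {c}) (hy : y ∈ A ∪ {c}) {p : G.Walk x y}
    (hp : p.IsPath) (hpS : ∀ v ∈ p.support, v ∈ S) : ∀ v ∈ p.support, v ∈ A ∪ {c} := by
  intro v hv
  -- A visit to `v ∈ B` would force the path through `c` both before and after `v`.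
  have hvB : v ∉ B := by
    intro hvB
    have htake : c ∈ (p.takeUntil v hv).support := hsep.mem_support hx hvB _
      fun u hu => hpS u (p.support_takeUntil_subset_support hv hu)
    have hdrop : c ∈ (p.dropUntil v hv).support := by
      simpa using hsep.mem_support hy hvB (p.dropUntil v hv).reverse fun u hu =>
        hpS u (p.support_dropUntil_subset_support hv (by simpa using hu))
    rw [← cons_tail_support, List.mem_cons] at hdrop
    have hnodup := hp.support_nodup
    rw [← p.take_spec hv, support_append] at hnodup
    exact List.disjoint_of_nodup_append hnodup htake
      (hdrop.resolve_left fun h => hcB (h ▸ hvB))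
  simpa [hvB] using hS (hpS v hv)

theorem Separates.eq_of_isShortestIn_same_side (hsep : G.Separates S c A B) (hcB : c ∉ B)
    (hS : S ⊆ A ∪ B ∪ {c}) (hAS : A ∪ {c} ⊆ S) (hA : G.HasUniqueShortestPathsIn (A ∪ {c}))
    (hx : x ∈ A ∪ {c}) (hy : y ∈ A ∪ {c}) {p q : G.Walk x y}
    (hp : p.IsShortestIn S) (hq : q.IsShortestIn S) : p = q :=
  hA p q (hp.of_subset hAS (hsep.support_subset hcB hS hx hy hp.isPath hp.support_subset))
    (hq.of_subset hAS (hsep.support_subset hcB hS hx hy hq.isPath hq.support_subset))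

theorem Separates.eq_of_isShortestIn_opposite_sides (hsep : G.Separates S c A B)
    (hcA : c ∉ A) (hcB : c ∉ B) (hS : S ⊆ A ∪ B ∪ {c}) (hAS : A ∪ {c} ⊆ S) (hBS : B ∪ {c} ⊆ S)
    (hA : G.HasUniqueShortestPathsIn (A ∪ {c})) (hB : G.HasUniqueShortestPathsIn (B ∪ {c}))
    (hx : x ∈ A) (hy : y ∈ B) {p q : G.Walk x y}
    (hp : p.IsShortestIn S) (hq : q.IsShortestIn S) : p = q := by
  have hSBA : S ⊆ B ∪ A ∪ {c} := Set.union_comm A B ▸ hS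
  have hcp := hsep x hx y hy p hp.support_subset
  have hcq := hsep x hx y hy q hq.support_subset
  have htake : p.takeUntil c hcp = q.takeUntil c hcq :=
    hsep.eq_of_isShortestIn_same_side hcB hS hAS hA (.inl hx) (.inr rfl)
      (hp.takeUntil hcp) (hq.takeUntil hcq)
  have hdrop : p.dropUntil c hcp = q.dropUntil c hcq :=
    hsep.symm.eq_of_isShortestIn_same_side hcA hSBA hBS hB (.inr rfl) (.inl hy)
      (hp.dropUntil hcp) (hq.dropUntil hcq)
  rw [← p.take_spec hcp, ← q.take_spec hcq, htake, hdrop]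

theorem hasUniqueShortestPathsIn_union (hcA : c ∉ A) (hcB : c ∉ B)
    (hsep : G.Separates (A ∪ B ∪ {c}) c A B) (hA : G.HasUniqueShortestPathsIn (A ∪ {c}))
    (hB : G.HasUniqueShortestPathsIn (B ∪ {c})) : G.HasUniqueShortestPathsIn (A ∪ B ∪ {c}) := by
  have hS : A ∪ B ∪ {c} ⊆ A ∪ B ∪ {c} := subset_rfl
  have hSBA : A ∪ B ∪ {c} ⊆ B ∪ A ∪ {c} := by rw [Set.union_comm A B]
  have hAS : A ∪ {c} ⊆ A ∪ B ∪ {c} := Set.union_subset_union_left _ Set.subset_union_left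
  have hBS : B ∪ {c} ⊆ A ∪ B ∪ {c} := Set.union_subset_union_left _ Set.subset_union_right
  intro x y p q hp hq
  rcases hp.support_subset x p.start_mem_support with (hxA | hxB) | hxc <;>
    rcases hp.support_subset y p.end_mem_support with (hyA | hyB) | hyc
  · exact hsep.eq_of_isShortestIn_same_side hcB hS hAS hA (.inl hxA) (.inl hyA) hp hq
  · exact hsep.eq_of_isShortestIn_opposite_sides hcA hcB hS hAS hBS hA hB hxA hyB hp hq
  · exact hsep.eq_of_isShortestIn_same_side hcB hS hAS hA (.inl hxA) (.inr hyc) hp hq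
  · exact hsep.symm.eq_of_isShortestIn_opposite_sides hcB hcA hSBA hBS hAS hB hA hxB hyA hp hq
  · exact hsep.symm.eq_of_isShortestIn_same_side hcA hSBA hBS hB (.inl hxB) (.inl hyB) hp hq
  · exact hsep.symm.eq_of_isShortestIn_same_side hcA hSBA hBS hB (.inl hxB) (.inr hyc) hp hq
  · exact hsep.eq_of_isShortestIn_same_side hcB hS hAS hA (.inr hxc) (.inl hyA) hp hq
  · exact hsep.symm.eq_of_isShortestIn_same_side hcA hSBA hBS hB (.inr hxc) (.inl hyB) hp hq
  · exact hsep.eq_of_isShortestIn_same_side hcB hS hAS hA (.inr hxc) (.inr hyc) hp hq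

theorem IsCliqueSumOfCompletes.hasUniqueShortestPathsIn (hS : G.IsCliqueSumOfCompletes S) :
    G.HasUniqueShortestPathsIn S := by
  induction hS with
  | complete S hclique => exact hasUniqueShortestPathsIn_of_isClique hclique
  | sum A B c _ hcA hcB _ _ hsep _ _ hA hB =>
    exact hasUniqueShortestPathsIn_union hcA hcB hsep hA hB

theorem Walk.isShortestIn_of_length_eq_dist {p : G.Walk x y} (hp : p.length = G.dist x y) :
    p.IsShortestIn {w | G.Reachable x w} :=
  ⟨p.isPath_of_length_eq_dist hp, fun v hv => ⟨p.takeUntil v hv⟩, fun r _ => hp ▸ dist_le r⟩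

theorem IsBlockGraph.eq_of_length_eq_dist (hG : G.IsBlockGraph) {p q : G.Walk x y}
    (hp : p.length = G.dist x y) (hq : q.length = G.dist x y) : p = q :=
  (hG x).hasUniqueShortestPathsIn p q (isShortestIn_of_length_eq_dist hp)
    (isShortestIn_of_length_eq_dist hq)

theorem IsBlockGraph.eq_append_reverse_of_mem_support (hG : G.IsBlockGraph)
    {p : G.Walk x y} {q : G.Walk x c} {r : G.Walk y c} (hp : p.length = G.dist x y)
    (hq : q.length = G.dist x c) (hr : r.length = G.dist y c) (hc : c ∈ p.support) :
    p = q.append r.reverse := by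
  have htake : p.takeUntil c hc = q := hG.eq_of_length_eq_dist
    (length_eq_dist_of_subwalk hp (p.isSubwalk_takeUntil hc)) hq
  have hdrop : p.dropUntil c hc = r.reverse := hG.eq_of_length_eq_dist
    (length_eq_dist_of_subwalk hp (p.isSubwalk_dropUntil hc))
    (by rw [length_reverse, hr, dist_comm])
  rw [← p.take_spec hc, htake, hdrop]

end DecidableEq

namespace Walk

variable (R : Type*) [CommSemiring R] {z : V}

noncomputable def edgeMonomial (p : G.Walk x y) : MvPolynomial (V ⊕ Sym2 V) R :=
  (p.edges.map fun e => X (Sum.inr e)).prod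

theorem edgeMonomial_append (p : G.Walk x y) (q : G.Walk y z) :
    (p.append q).edgeMonomial R = p.edgeMonomial R * q.edgeMonomial R := by
  simp [edgeMonomial, edges_append]

theorem edgeMonomial_reverse (p : G.Walk x y) : p.reverse.edgeMonomial R = p.edgeMonomial R := by
  simp [edgeMonomial, edges_reverse]

theorem aeval_elim_one_edgeMonomial {A : Type*} [CommSemiring A] [Algebra R A] (f : V → A)
    (p : G.Walk x y) : aeval (Sum.elim f 1) (p.edgeMonomial R) = 1 := by
  rw [edgeMonomial, map_list_prod, List.map_map]
  exact List.prod_eq_one (by simp)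

end Walk

end SimpleGraph

theorem AlgHom.ker_toRingHom_eq_of_comp_eq {R A B C : Type*} [CommSemiring R] [Semiring A]
    [Semiring B] [Semiring C] [Algebra R A] [Algebra R B] [Algebra R C] {f : A →ₐ[R] B}
    {f' : A →ₐ[R] C} (g : B →ₐ[R] C) (g' : C →ₐ[R] B) (hg : g.comp f = f')
    (hg' : g'.comp f' = f) : RingHom.ker f.toRingHom = RingHom.ker f'.toRingHom := by
  ext x
  simp only [RingHom.mem_ker, toRingHom_eq_coe, RingHom.coe_coe]
  constructor
  · intro hx
    rw [← hg, comp_apply, hx, map_zero]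
  · intro hx
    rw [← hg', comp_apply, hx, map_zero]

open SimpleGraph

theorem psiMon_eq_mul_edgeMonomial {G : SimpleGraph (Fin n)} (sp : ∀ i j : Fin n, G.Walk i j)
    (e : Sym2 (Fin n)) :
    psiMon sp e = X (.inl e.out.1) * X (.inl e.out.2) * (sp e.out.1 e.out.2).edgeMonomial ℝ := by
  rw [psiMon, Walk.edgeMonomial, Walk.edges, List.map_map]
  rfl

theorem psiMon_eq_of_throughC {G : SimpleGraph (Fin n)} (hG : G.IsBlockGraph)
    {sp : ∀ i j : Fin n, G.Walk i j} (hsp : ∀ i j, (sp i j).length = G.dist i j) {c : Fin n}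
    {e : Sym2 (Fin n)} (he : throughC sp c e) :
    psiMon sp e = X (.inl e.out.1) * (sp e.out.1 c).edgeMonomial ℝ *
      (X (.inl e.out.2) * (sp e.out.2 c).edgeMonomial ℝ) := by
  rw [psiMon_eq_mul_edgeMonomial, hG.eq_append_reverse_of_mem_support (hsp _ _) (hsp _ _)
    (hsp _ _) he, Walk.edgeMonomial_append, Walk.edgeMonomial_reverse]
  ring

theorem ker_restricted_psi_eq_ker_simplified_general (G : SimpleGraph (Fin n))
    (hG : G.IsBlockGraph)
    (sp : ∀ i j : Fin n, G.Walk i j)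
    (hsp : ∀ i j, (sp i j).IsPath ∧ (sp i j).length = G.dist i j)
    (c : Fin n) :
    RingHom.ker (MvPolynomial.aeval
        (fun e : {e : Sym2 (Fin n) // throughC sp c e} => psiMon sp e.1) :
        MvPolynomial {e : Sym2 (Fin n) // throughC sp c e} ℝ →ₐ[ℝ]
          MvPolynomial (Fin n ⊕ Sym2 (Fin n)) ℝ).toRingHom =
      RingHom.ker (MvPolynomial.aeval
        (fun e : {e : Sym2 (Fin n) // throughC sp c e} =>
          (X e.1.out.1 * X e.1.out.2 : MvPolynomial (Fin n) ℝ)) :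
        MvPolynomial {e : Sym2 (Fin n) // throughC sp c e} ℝ →ₐ[ℝ]
          MvPolynomial (Fin n) ℝ).toRingHom := by
  refine AlgHom.ker_toRingHom_eq_of_comp_eq (aeval (Sum.elim X 1))
    (aeval fun i => X (.inl i) * (sp i c).edgeMonomial ℝ) (algHom_ext fun e => ?_)
    (algHom_ext fun e => ?_)
  · simp only [AlgHom.comp_apply, aeval_X, psiMon_eq_mul_edgeMonomial, map_mul,
      Walk.aeval_elim_one_edgeMonomial, Sum.elim_inl, mul_one]
  · simp only [AlgHom.comp_apply, aeval_X, map_mul,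
      psiMon_eq_of_throughC hG (fun i j => (hsp i j).2) e.2]

/-- For a block graph with a single central vertex `c`, the kernel of the shortest path
map `ψ` restricted to the variables `σ_{ij}` whose shortest path contains `c`
(i.e. `{i,j} ∉ D`) equals the kernel of the simplified map `σ_{ij} ↦ a_i a_j`. -/
theorem ker_restricted_psi_eq_ker_simplified (G : SimpleGraph (Fin n))
    (hG : G.IsBlockGraph) (hconn : G.Connected)
    (sp : ∀ i j : Fin n, G.Walk i j)
    (hsp : ∀ i j, (sp i j).IsPath ∧ (sp i j).length = G.dist i j)
    (c : Fin n) (hc : IsCentralVertex G c)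
    (huniq : ∀ c', IsCentralVertex G c' → c' = c) :
    RingHom.ker (MvPolynomial.aeval
        (fun e : {e : Sym2 (Fin n) // throughC sp c e} => psiMon sp e.1) :
        MvPolynomial {e : Sym2 (Fin n) // throughC sp c e} ℝ →ₐ[ℝ]
          MvPolynomial (Fin n ⊕ Sym2 (Fin n)) ℝ).toRingHom =
      RingHom.ker (MvPolynomial.aeval
        (fun e : {e : Sym2 (Fin n) // throughC sp c e} =>
          (X e.1.out.1 * X e.1.out.2 : MvPolynomial (Fin n) ℝ)) :
        MvPolynomial {e : Sym2 (Fin n) // throughC sp c e} ℝ →ₐ[ℝ]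
          MvPolynomial (Fin n) ℝ).toRingHom :=
  ker_restricted_psi_eq_ker_simplified_general G hG sp hsp c
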